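/- Under the Lanchester supply model with constant fire allocation $p \in [0,1]^{2n}$, $\sum p_k = 1$, the cumulative Blue firepower $X(t) = \int_0^t B(s)\,ds$ satisfies the autonomous second-order ODE $X''(t) = -C_1 X(t)^2 + C_2 X(t) - C_3$, where $C_1 = \sum_{i=1}^n p_i p_{n+i} r_{R^i} r_{A^i} (\alpha_c^i - \alpha_d^i)/A_0^i$, $C_2 = \sum_{i=1}^n [p_{n+i} r_{A^i} (\alpha_c^i - \alpha_d^i) R_0^i + p_i r_{R^i} \alpha_c^i A_0^i]/A_0^i$, and $C_3 = \sum_{i=1}^n \alpha_c^i R_0^i$. -/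

import Mathlib

/-!
Both supplies `Rⁱ` and `Aⁱ` decrease at a constant multiple of `B = X'`, so they are affine
functions of `X`. Substituting them into the equation for `B' = X''` turns the bilinear
attrition term `(αdⁱ + (αcⁱ - αdⁱ) Aⁱ / A₀ⁱ) Rⁱ` into a quadratic polynomial in `X`.
-/

open Finset

theorem eq_sub_mul_of_hasDerivAt_neg_mul {f X b : ℝ → ℝ} {c : ℝ}
    (hf : ∀ u, HasDerivAt f (-(c * b u)) u) (hX : ∀ u, HasDerivAt X (b u) u) (t : ℝ) :
    f t = f 0 - c * (X t - X 0) := by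
  have hconst : ∀ u, HasDerivAt (f + fun u => c * X u) 0 u := fun u => by
    simpa only [neg_add_cancel] using (hf u).add ((hX u).const_mul c)
  have := is_const_of_deriv_eq_zero (fun u => (hconst u).differentiableAt)
    (fun u => (hconst u).deriv) t 0
  simp only [Pi.add_apply] at this
  linarith

theorem attrition_sum_eq_quadratic {ι : Type*} [Fintype ι] (αd αc A₀ R₀ a r : ι → ℝ)
    (hA₀ : ∀ i, A₀ i ≠ 0) (x : ℝ) :
    ∑ i, (αd i + (αc i - αd i) * (A₀ i - a i * x) / A₀ i) * (R₀ i - r i * x)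
      = (∑ i, r i * a i * (αc i - αd i) / A₀ i) * x ^ 2
        - (∑ i, (a i * (αc i - αd i) * R₀ i + r i * αc i * A₀ i) / A₀ i) * x
        + ∑ i, αc i * R₀ i := by
  rw [sum_mul, sum_mul, ← sum_sub_distrib, ← sum_add_distrib]
  refine sum_congr rfl fun i _ => ?_
  field_simp [hA₀ i]
  ring

theorem stmt_6_general (n : ℕ)
    (B : ℝ → ℝ) (R A : Fin n → ℝ → ℝ)
    (p : Fin (n + n) → ℝ)
    (rR rA αc αd R₀ A₀ : Fin n → ℝ)
    (hA₀ : ∀ i, 0 < A₀ i)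
    (hB : ∀ t, HasDerivAt B
      (-(∑ i, (αd i + (αc i - αd i) * A i t / A₀ i) * R i t)) t)
    (hR : ∀ i, ∀ t, HasDerivAt (R i) (-(p (Fin.castAdd n i) * rR i * B t)) t)
    (hA : ∀ j, ∀ t, HasDerivAt (A j) (-(p (Fin.natAdd n j) * rA j * B t)) t)
    (hR0 : ∀ i, R i 0 = R₀ i) (hA0 : ∀ j, A j 0 = A₀ j)
    (X : ℝ → ℝ) (hX : ∀ t, X t = ∫ s in (0:ℝ)..t, B s)
    (C₁ C₂ C₃ : ℝ)
    (hC₁ : C₁ = ∑ i, p (Fin.castAdd n i) * p (Fin.natAdd n i) * rR i * rA i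
      * (αc i - αd i) / A₀ i)
    (hC₂ : C₂ = ∑ i, (p (Fin.natAdd n i) * rA i * (αc i - αd i) * R₀ i
      + p (Fin.castAdd n i) * rR i * αc i * A₀ i) / A₀ i)
    (hC₃ : C₃ = ∑ i, αc i * R₀ i) :
    ∀ t : ℝ, 0 ≤ t →
      HasDerivAt X (B t) t ∧
      HasDerivAt B (-C₁ * (X t) ^ 2 + C₂ * X t - C₃) t := by
  have hBcont : Continuous B := continuous_iff_continuousAt.2 fun t => (hB t).continuousAt
  have hX' : ∀ t, HasDerivAt X (B t) t := fun t => by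
    rw [funext hX]
    exact (hBcont.integral_hasStrictDerivAt 0 t).hasDerivAt
  have hX0 : X 0 = 0 := by simp [hX]
  intro t _
  have hRt : ∀ i, R i t = R₀ i - p (Fin.castAdd n i) * rR i * X t := fun i => by
    simpa [hR0, hX0] using eq_sub_mul_of_hasDerivAt_neg_mul (hR i) hX' t
  have hAt : ∀ i, A i t = A₀ i - p (Fin.natAdd n i) * rA i * X t := fun i => by
    simpa [hA0, hX0] using eq_sub_mul_of_hasDerivAt_neg_mul (hA i) hX' t
  have hC₁' : C₁ = ∑ i, p (Fin.castAdd n i) * rR i * (p (Fin.natAdd n i) * rA i)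
      * (αc i - αd i) / A₀ i := by
    rw [hC₁]
    exact sum_congr rfl fun i _ => by ring
  refine ⟨hX' t, ?_⟩
  convert hB t using 1
  simp only [hRt, hAt]
  rw [attrition_sum_eq_quadratic _ _ _ _ _ _ (fun i => (hA₀ i).ne'), hC₁', hC₂, hC₃]
  ring

/-- Under the Lanchester supply model with constant allocation, the cumulative
firepower `X` satisfies `X'' = -C₁ X² + C₂ X - C₃` with the stated constants. -/
theorem stmt_6 (n : ℕ) (hn : 1 ≤ n)
    (B : ℝ → ℝ) (R A : Fin n → ℝ → ℝ)
    (p : Fin (n + n) → ℝ) (hp0 : ∀ k, 0 ≤ p k ∧ p k ≤ 1) (hp1 : (∑ k, p k) = 1)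
    (rR rA αc αd R₀ A₀ : Fin n → ℝ)
    (hrR : ∀ i, 0 ≤ rR i) (hrA : ∀ i, 0 ≤ rA i)
    (hαd : ∀ i, 0 ≤ αd i) (hα : ∀ i, αd i ≤ αc i) (hA₀ : ∀ i, 0 < A₀ i)
    (hBcont : Continuous B)
    (hB : ∀ t, HasDerivAt B
      (-(∑ i, (αd i + (αc i - αd i) * A i t / A₀ i) * R i t)) t)
    (hR : ∀ i, ∀ t, HasDerivAt (R i) (-(p (Fin.castAdd n i) * rR i * B t)) t)
    (hA : ∀ j, ∀ t, HasDerivAt (A j) (-(p (Fin.natAdd n j) * rA j * B t)) t)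
    (hR0 : ∀ i, R i 0 = R₀ i) (hA0 : ∀ j, A j 0 = A₀ j)
    (X : ℝ → ℝ) (hX : ∀ t, X t = ∫ s in (0:ℝ)..t, B s)
    (C₁ C₂ C₃ : ℝ)
    (hC₁ : C₁ = ∑ i, p (Fin.castAdd n i) * p (Fin.natAdd n i) * rR i * rA i
      * (αc i - αd i) / A₀ i)
    (hC₂ : C₂ = ∑ i, (p (Fin.natAdd n i) * rA i * (αc i - αd i) * R₀ i
      + p (Fin.castAdd n i) * rR i * αc i * A₀ i) / A₀ i)
    (hC₃ : C₃ = ∑ i, αc i * R₀ i) :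
    ∀ t : ℝ, 0 ≤ t →
      HasDerivAt X (B t) t ∧
      HasDerivAt B (-C₁ * (X t) ^ 2 + C₂ * X t - C₃) t :=
  stmt_6_general n B R A p rR rA αc αd R₀ A₀ hA₀ hB hR hA hR0 hA0 X hX C₁ C₂ C₃ hC₁ hC₂ hC₃
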